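/- Let the facet F of the convex hull of the 12 points (two unit-edge regular hexagons in totally orthogonal planes inscribed in S^3) be projected radially onto S^3. Then the resulting 3-dimensional spherical simplex has two opposite edges of angular length π/3 and four edges of angular length π/2, and its circumradius equals arccos(√(3/8)). -/

import Mathlib

open scoped RealInnerProductSpace
open Real

noncomputable def pt4 (a b c e : ℝ) : EuclideanSpace ℝ (Fin 4) :=
  (WithLp.equiv 2 (Fin 4 → ℝ)).symm ![a, b, c, e]

/-- Two consecutive vertices of the first hexagon. -/
noncomputable def a0 : EuclideanSpace ℝ (Fin 4) := pt4 1 0 0 0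
noncomputable def a1 : EuclideanSpace ℝ (Fin 4) := pt4 (cos (π / 3)) (sin (π / 3)) 0 0
/-- Two consecutive vertices of the second (totally orthogonal) hexagon. -/
noncomputable def b0 : EuclideanSpace ℝ (Fin 4) := pt4 0 0 1 0
noncomputable def b1 : EuclideanSpace ℝ (Fin 4) := pt4 0 0 (cos (π / 3)) (sin (π / 3))

/-!
If the vectors `v i` all have the same inner product `k` with their sum `s`, then
`‖s‖² = n k`, and the unit vector `s / ‖s‖` is at angle `arccos (‖s‖ / n)` from each of them.
No unit vector `c` does better: `∑ ⟪c, v i⟫ = ⟪c, s⟫ ≤ ‖s‖` by Cauchy–Schwarz, so some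
`⟪c, v i⟫ ≤ ‖s‖ / n`. For the facet, `⟪s, v⟫ = 1 + cos (π / 3) = 3 / 2` for every vertex,
whence the circumradius `arccos √(3 / 8)`.
-/

section Circumradius

variable {E : Type*} [NormedAddCommGroup E] [InnerProductSpace ℝ E]
  {ι : Type*} [Fintype ι] (v : ι → E)

theorem norm_sum_sq_eq_card_mul {k : ℝ} (hv : ∀ i, ⟪∑ j, v j, v i⟫ = k) :
    ‖∑ j, v j‖ ^ 2 = Fintype.card ι * k := by
  rw [← real_inner_self_eq_norm_sq, inner_sum]
  simp [hv]

theorem exists_inner_le_norm_sum_div_card [Nonempty ι] {c : E} (hc : ‖c‖ ≤ 1) :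
    ∃ i, ⟪c, v i⟫ ≤ ‖∑ j, v j‖ / Fintype.card ι := by
  have hsum : ∑ i, ⟪c, v i⟫ ≤ ∑ _i : ι, ‖∑ j, v j‖ / Fintype.card ι := calc
    ∑ i, ⟪c, v i⟫ = ⟪c, ∑ j, v j⟫ := (inner_sum _ _ _).symm
    _ ≤ ‖c‖ * ‖∑ j, v j‖ := real_inner_le_norm _ _
    _ ≤ ‖∑ j, v j‖ := mul_le_of_le_one_left (norm_nonneg _) hc
    _ = ∑ _i : ι, ‖∑ j, v j‖ / Fintype.card ι := by
      rw [Finset.sum_const, Finset.card_univ, nsmul_eq_mul,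
        mul_div_cancel₀ _ (Nat.cast_ne_zero.mpr Fintype.card_ne_zero)]
  obtain ⟨i, -, hi⟩ := Finset.exists_le_of_sum_le Finset.univ_nonempty hsum
  exact ⟨i, hi⟩

theorem isLeast_arccos_of_inner_sum_eq [Nonempty ι] {k : ℝ} (hk : 0 < k)
    (hv : ∀ i, ⟪∑ j, v j, v i⟫ = k) :
    IsLeast {r | ∃ c : E, ‖c‖ = 1 ∧ ∀ i, arccos ⟪c, v i⟫ ≤ r}
      (arccos √(k / Fintype.card ι)) := by
  set s := ∑ j, v j
  set n : ℝ := (Fintype.card ι : ℝ)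
  have hn : 0 < n := Nat.cast_pos.mpr Fintype.card_pos
  have hs2 : ‖s‖ ^ 2 = n * k := norm_sum_sq_eq_card_mul v hv
  have hs : 0 < ‖s‖ := (norm_nonneg s).lt_of_ne' (sq_pos_iff.mp (hs2 ▸ mul_pos hn hk))
  have hsqrt : √(k / n) = ‖s‖ / n := by
    rw [← sqrt_sq (div_nonneg (norm_nonneg s) hn.le), div_pow, hs2]
    field_simp
  rw [hsqrt]
  constructor
  · refine ⟨‖s‖⁻¹ • s, by rw [norm_smul, norm_inv, norm_norm, inv_mul_cancel₀ hs.ne'], ?_⟩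
    intro i
    rw [real_inner_smul_left, hv]
    refine le_of_eq (congrArg arccos ?_)
    field_simp
    linarith
  · rintro r ⟨c, hc, hcr⟩
    obtain ⟨i, hi⟩ := exists_inner_le_norm_sum_div_card v hc.le
    exact (arccos_le_arccos hi).trans (hcr i)

end Circumradius

theorem inner_pt4 (a b c e a' b' c' e' : ℝ) :
    ⟪pt4 a b c e, pt4 a' b' c' e'⟫ = a * a' + b * b' + c * c' + e * e' := by
  simp [pt4, PiLp.inner_apply, Fin.sum_univ_four]
  ring

theorem inner_pt4_eq_zero_of_orthogonal_planes (a b c e : ℝ) :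
    ⟪pt4 a b 0 0, pt4 0 0 c e⟫ = 0 := by
  simp [inner_pt4]

theorem inner_sum_facet_vertices (i : Fin 4) :
    ⟪∑ j, ![a0, a1, b0, b1] j, ![a0, a1, b0, b1] i⟫ = 3 / 2 := by
  have hcos_sq_add_sin_sq := cos_sq_add_sin_sq (π / 3)
  rw [cos_pi_div_three] at hcos_sq_add_sin_sq
  fin_cases i <;>
    simp [-inner_self_eq_norm_sq_to_K, -sin_pi_div_three, Fin.sum_univ_four, inner_add_left,
      a0, a1, b0, b1, inner_pt4] <;> linarith

theorem arccos_cos_pi_div_three : arccos (cos (π / 3)) = π / 3 :=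
  arccos_cos (by positivity) (by linarith [pi_pos])

theorem facet_simplex_edges_and_circumradius :
    Real.arccos ⟪a0, a1⟫ = π / 3 ∧
    Real.arccos ⟪b0, b1⟫ = π / 3 ∧
    (∀ u ∈ ({a0, a1} : Set (EuclideanSpace ℝ (Fin 4))),
      ∀ v ∈ ({b0, b1} : Set (EuclideanSpace ℝ (Fin 4))),
        Real.arccos ⟪u, v⟫ = π / 2) ∧
    sInf {r : ℝ | ∃ c : EuclideanSpace ℝ (Fin 4), ‖c‖ = 1 ∧
        ∀ v ∈ ({a0, a1, b0, b1} : Set (EuclideanSpace ℝ (Fin 4))),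
          Real.arccos ⟪c, v⟫ ≤ r} =
      Real.arccos (Real.sqrt (3 / 8)) := by
  refine ⟨?_, ?_, ?_, ?_⟩
  · rw [a0, a1, inner_pt4]
    simpa using arccos_cos_pi_div_three
  · rw [b0, b1, inner_pt4]
    simpa using arccos_cos_pi_div_three
  · rintro u (rfl | rfl) v (rfl | rfl) <;>
      simp [a0, a1, b0, b1, inner_pt4_eq_zero_of_orthogonal_planes]
  · have hrange : ({a0, a1, b0, b1} : Set (EuclideanSpace ℝ (Fin 4))) =
        Set.range ![a0, a1, b0, b1] := by
      simp only [Matrix.range_cons, Matrix.range_empty, Set.union_empty, Set.singleton_union]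
    rw [hrange]
    simp only [Set.forall_mem_range]
    convert (isLeast_arccos_of_inner_sum_eq ![a0, a1, b0, b1] (by norm_num)
      inner_sum_facet_vertices).csInf_eq using 3
    norm_num
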